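/- arXiv:1604.03714 — 4 statements merged into one kernel-verified Lean document; each statement's English description precedes it below -/
import Mathlib

section
/- Let α_i, β_i ∈ ℝ³ be linearly independent, let k_α, k_β, l_α, l_β > 0, and let Ω : ℝ → ℝ³ be continuous with ‖Ω(t)‖ ≤ c_ω for all t and some c_ω ≥ 0. Then every solution E = (E_α, E_β, E_b) : [t₀, ∞) → ℝ³ × ℝ³ × ℝ³ of the error system Ė_α = E_b × (α_i + E_α) − k_α E_α, Ė_β = E_b × (β_i + E_β) − k_β E_β, Ė_b = Ω × E_b + l_α E_α × α_i + l_β E_β × β_i converges to (0,0,0) as t → ∞. -/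
open scoped RealInnerProductSpace
open Matrix Filter

noncomputable section

/-- ℝ³ with the Euclidean norm and inner product. -/
abbrev V3 : Type := EuclideanSpace ℝ (Fin 3)

/-- Identity identification of `V3` with plain functions `Fin 3 → ℝ`. -/
def toF (v : V3) : Fin 3 → ℝ := v

/-- Identity identification of plain functions `Fin 3 → ℝ` with `V3`. -/
def toE (v : Fin 3 → ℝ) : V3 := WithLp.toLp 2 v

/-- The cross product on ℝ³. -/
def cross (v w : V3) : V3 := toE (crossProduct (toF v) (toF w))

/-- `(Eα, Eβ, Eb)` is a solution on `[t₀, ∞)` of the error system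
`Ėα = Eb × (αi + Eα) − kα Eα`, `Ėβ = Eb × (βi + Eβ) − kβ Eβ`,
`Ėb = Ω × Eb + lα Eα × αi + lβ Eβ × βi`. -/
def IsSolution (αi βi : V3) (kα kβ lα lβ : ℝ) (Ω : ℝ → V3) (t₀ : ℝ)
    (Eα Eβ Eb : ℝ → V3) : Prop :=
  ∀ t ∈ Set.Ici t₀,
    HasDerivWithinAt Eα (cross (Eb t) (αi + Eα t) - kα • Eα t) (Set.Ici t₀) t ∧
    HasDerivWithinAt Eβ (cross (Eb t) (βi + Eβ t) - kβ • Eβ t) (Set.Ici t₀) t ∧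
    HasDerivWithinAt Eb
      (cross (Ω t) (Eb t) + lα • cross (Eα t) αi + lβ • cross (Eβ t) βi) (Set.Ici t₀) t

/-- The Euclidean norm of a state `(Eα, Eβ, Eb) ∈ ℝ³ × ℝ³ × ℝ³`. -/
def stateNorm (Eα Eβ Eb : V3) : ℝ := Real.sqrt (‖Eα‖ ^ 2 + ‖Eβ‖ ^ 2 + ‖Eb‖ ^ 2)

/-!
The Lyapunov function `V = lα ‖Eα‖² + lβ ‖Eβ‖² + ‖Eb‖²` satisfies
`V' = -2 lα kα ‖Eα‖² - 2 lβ kβ ‖Eβ‖²`: the cross terms `⟪Eb, Eα × αi⟫` cancel and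
`⟪Eb, Ω × Eb⟫ = 0`. Hence `V` decreases to a limit and the state stays bounded, so all
derivatives are bounded. Barbalat's lemma then gives `V' → 0`, i.e. `Eα, Eβ → 0`; applied once
more to `Eα`, `Eβ` it gives `Ėα, Ėβ → 0`, hence `Eb × αi → 0` and `Eb × βi → 0`. Since `αi`, `βi`
are independent, `v ↦ (v × αi, v × βi)` is injective, so `Eb → 0`.
-/

open Set Filter Topology Asymptotics

lemma cross_add_left (a b c : V3) : cross (a + b) c = cross a c + cross b c := by
  simp [cross, toE, toF]

lemma cross_smul_left (r : ℝ) (a c : V3) : cross (r • a) c = r • cross a c := by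
  simp [cross, toE, toF]

lemma cross_add_right (a b c : V3) : cross a (b + c) = cross a b + cross a c := by
  simp [cross, toE, toF]

lemma cross_smul_right (r : ℝ) (a c : V3) : cross a (r • c) = r • cross a c := by
  simp [cross, toE, toF]

lemma inner_cross_self (a b : V3) : ⟪a, cross b a⟫ = 0 := by
  simp [cross, toE, toF, crossProduct, PiLp.inner_apply, Fin.sum_univ_three]
  ring

lemma inner_cross_swap (a b c : V3) : ⟪a, cross b c⟫ = -⟪b, cross a c⟫ := by
  simp [cross, toE, toF, crossProduct, PiLp.inner_apply, Fin.sum_univ_three]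
  ring

lemma norm_cross_sq_add_inner_sq (a b : V3) :
    ‖cross a b‖ ^ 2 + ⟪a, b⟫ ^ 2 = ‖a‖ ^ 2 * ‖b‖ ^ 2 := by
  simp [EuclideanSpace.real_norm_sq_eq, cross, toE, toF, crossProduct, PiLp.inner_apply,
    Fin.sum_univ_three]
  ring

lemma norm_cross_le (a b : V3) : ‖cross a b‖ ≤ ‖a‖ * ‖b‖ := by
  have := norm_cross_sq_add_inner_sq a b
  exact le_of_sq_le_sq (by nlinarith [sq_nonneg ⟪a, b⟫]) (by positivity)

def crossL : V3 →L[ℝ] V3 →L[ℝ] V3 :=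
  (LinearMap.mk₂ ℝ cross cross_add_left cross_smul_left cross_add_right
    cross_smul_right).mkContinuous₂ 1 fun a b => by simpa using norm_cross_le a b

lemma exists_smul_eq_of_cross_eq_zero {v w : V3} (hv : v ≠ 0) (h : cross v w = 0) :
    ∃ c : ℝ, c • v = w := by
  have hv' : toF v ≠ 0 := fun h0 => hv (by simpa [toF] using h0)
  by_contra! hne
  have hli : LinearIndependent ℝ ![toF v, toF w] :=
    (LinearIndependent.pair_iff' hv').2 fun c hc =>
      hne c (WithLp.ofLp_injective 2 (by simpa [toF] using hc))
  exact crossProduct_ne_zero_iff_linearIndependent.2 hli (by simpa [cross, toE] using h)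

lemma eq_zero_of_cross_eq_zero {a b v : V3} (hab : LinearIndependent ℝ ![a, b])
    (ha : cross v a = 0) (hb : cross v b = 0) : v = 0 := by
  by_contra hv
  obtain ⟨s, rfl⟩ := exists_smul_eq_of_cross_eq_zero hv ha
  obtain ⟨t, rfl⟩ := exists_smul_eq_of_cross_eq_zero hv hb
  obtain ⟨ht, -⟩ := LinearIndependent.pair_iff.1 hab t (-s) (by
    rw [smul_smul, smul_smul, ← add_smul, mul_comm, neg_mul, add_neg_cancel, zero_smul])
  exact hab.ne_zero 1 (by simp [ht])

lemma HasDerivAt.cross {f g : ℝ → V3} {f' g' : V3} {t : ℝ} (hf : HasDerivAt f f' t)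
    (hg : HasDerivAt g g' t) :
    HasDerivAt (fun s => cross (f s) (g s)) (cross (f t) g' + cross f' (g t)) t :=
  crossL.hasDerivAt_of_bilinear (fun _ => hf) (fun _ => hg)

section Barbalat

variable {F : Type*} [NormedAddCommGroup F] [NormedSpace ℝ F] {f f' f'' : ℝ → F}

lemma mul_norm_deriv_le_of_norm_deriv2_le {t δ C : ℝ} (hδ : 0 ≤ δ)
    (hf : ∀ s ∈ Icc t (t + δ), HasDerivAt f (f' s) s)
    (hf' : ∀ s ∈ Icc t (t + δ), HasDerivAt f' (f'' s) s)
    (hC : ∀ s ∈ Icc t (t + δ), ‖f'' s‖ ≤ C) :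
    δ * ‖f' t‖ ≤ ‖f (t + δ) - f t‖ + C * δ ^ 2 := by
  have ht : t ∈ Icc t (t + δ) := left_mem_Icc.2 (by linarith)
  have htδ : t + δ ∈ Icc t (t + δ) := right_mem_Icc.2 (by linarith)
  have hf'_sub : ∀ s ∈ Icc t (t + δ), ‖f' s - f' t‖ ≤ C * δ := fun s hs =>
    calc ‖f' s - f' t‖ ≤ C * ‖s - t‖ :=
          (convex_Icc t (t + δ)).norm_image_sub_le_of_norm_hasDerivWithin_le
            (fun x hx => (hf' x hx).hasDerivWithinAt) hC ht hs
      _ ≤ C * δ := by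
          rw [Real.norm_of_nonneg (sub_nonneg.2 hs.1)]
          exact mul_le_mul_of_nonneg_left (by linarith [hs.2]) ((norm_nonneg _).trans (hC t ht))
  -- `s ↦ f s - s • f' t` has derivative `f' s - f' t`, which is at most `C * δ` in norm
  have hmv := (convex_Icc t (t + δ)).norm_image_sub_le_of_norm_hasDerivWithin_le
    (f := fun s => f s - s • f' t) (fun s hs =>
      ((hf s hs).sub ((hasDerivAt_id' s).smul_const (f' t))).hasDerivWithinAt.congr_deriv
        (by rw [one_smul]))
    hf'_sub ht htδ
  have hsplit : δ • f' t =
      (f (t + δ) - f t) - ((f (t + δ) - (t + δ) • f' t) - (f t - t • f' t)) := by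
    rw [add_smul]; abel
  calc δ * ‖f' t‖ = ‖δ • f' t‖ := by rw [norm_smul, Real.norm_of_nonneg hδ]
    _ ≤ ‖f (t + δ) - f t‖ + C * δ * ‖t + δ - t‖ := hsplit ▸ (norm_sub_le _ _).trans (by gcongr)
    _ = ‖f (t + δ) - f t‖ + C * δ ^ 2 := by
        rw [add_sub_cancel_left, Real.norm_of_nonneg hδ]; ring

/-- Barbalat's lemma, with a bounded second derivative in place of uniform continuity of `f'`. -/
theorem Filter.Tendsto.tendsto_deriv_zero {l : F} (hl : Tendsto f atTop (𝓝 l))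
    (hf : ∀ᶠ t in atTop, HasDerivAt f (f' t) t)
    (hf' : ∀ᶠ t in atTop, HasDerivAt f' (f'' t) t)
    (hf'' : f'' =O[atTop] (1 : ℝ → ℝ)) : Tendsto f' atTop (𝓝 0) := by
  obtain ⟨C, hC⟩ := ((isBigO_one_iff ℝ).1 hf'').eventually_le
  obtain ⟨T, hT⟩ := eventually_atTop.1 (hf.and (hf'.and hC))
  have hC0 : 0 ≤ C := (norm_nonneg _).trans (hT T le_rfl).2.2
  refine Metric.tendsto_nhds.2 fun ε hε => ?_
  set δ := ε / (2 * (C + 1))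
  have hδ : 0 < δ := by positivity
  have hCδ : C * δ < ε / 2 := by
    rw [mul_div_assoc', div_lt_div_iff₀ (by positivity) two_pos]; nlinarith
  have hgap : Tendsto (fun t => f (t + δ) - f t) atTop (𝓝 0) := by
    simpa using (hl.comp (tendsto_atTop_add_const_right _ δ tendsto_id)).sub hl
  filter_upwards [eventually_ge_atTop T, Metric.tendsto_nhds.1 hgap (ε * δ / 2) (by positivity)]
    with t ht hgap_t
  rw [dist_zero_right] at hgap_t ⊢
  have := mul_norm_deriv_le_of_norm_deriv2_le hδ.le (fun s hs => (hT s (ht.trans hs.1)).1)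
    (fun s hs => (hT s (ht.trans hs.1)).2.1) (fun s hs => (hT s (ht.trans hs.1)).2.2)
  nlinarith

end Barbalat

lemma exists_tendsto_of_hasDerivAt_nonpos {f f' : ℝ → ℝ}
    (hf : ∀ᶠ t in atTop, HasDerivAt f (f' t) t) (hf' : ∀ᶠ t in atTop, f' t ≤ 0)
    (hbdd : BddBelow (range f)) : ∃ c, Tendsto f atTop (𝓝 c) := by
  obtain ⟨T, hT⟩ := eventually_atTop.1 (hf.and hf')
  have hanti : AntitoneOn f (Ici T) :=
    antitoneOn_of_hasDerivWithinAt_nonpos (convex_Ici T)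
      (fun t ht => (hT t ht).1.continuousAt.continuousWithinAt)
      (fun t ht => (hT t (interior_subset ht)).1.hasDerivWithinAt)
      (fun t ht => (hT t (interior_subset ht)).2)
  have hanti' : Antitone fun t => f (max t T) := fun s t hst =>
    hanti (le_max_right s T) (le_max_right t T) (max_le_max hst le_rfl)
  refine ⟨_, (tendsto_atTop_ciInf hanti' (hbdd.mono (range_comp_subset_range _ f))).congr' ?_⟩
  filter_upwards [eventually_ge_atTop T] with t ht
  rw [max_eq_left ht]

section Bilinear

variable {α E F G : Type*} [NormedAddCommGroup E] [NormedSpace ℝ E] [NormedAddCommGroup F]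
  [NormedSpace ℝ F] [NormedAddCommGroup G] [NormedSpace ℝ G] {l : Filter α}

lemma IsBoundedBilinearMap.isBigO_one {B : E × F → G} (hB : IsBoundedBilinearMap ℝ B)
    {f : α → E} {g : α → F} (hf : f =O[l] (1 : α → ℝ)) (hg : g =O[l] (1 : α → ℝ)) :
    (fun x => B (f x, g x)) =O[l] (1 : α → ℝ) :=
  hB.isBigO_comp.trans <| (hf.norm_left.mul hg.norm_left).trans <| isBigO_of_le l fun x => by simp

lemma IsBoundedBilinearMap.tendsto_zero {B : E × F → G} (hB : IsBoundedBilinearMap ℝ B)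
    {f : α → E} {g : α → F} (hf : f =O[l] (1 : α → ℝ)) (hg : Tendsto g l (𝓝 0)) :
    Tendsto (fun x => B (f x, g x)) l (𝓝 0) := by
  have hg' : (fun x => ‖g x‖) =o[l] (1 : α → ℝ) :=
    (isLittleO_one_iff ℝ).2 (tendsto_zero_iff_norm_tendsto_zero.1 hg)
  exact (isLittleO_one_iff ℝ).1 <|
    hB.isBigO_comp.trans_isLittleO <| (hf.norm_left.mul_isLittleO hg').trans_isBigO <|
      isBigO_of_le l fun x => by simp

end Bilinear

lemma isBigO_one_inner {α E : Type*} [NormedAddCommGroup E] [InnerProductSpace ℝ E]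
    {l : Filter α} {f g : α → E} (hf : f =O[l] (1 : α → ℝ)) (hg : g =O[l] (1 : α → ℝ)) :
    (fun x => ⟪f x, g x⟫) =O[l] (1 : α → ℝ) :=
  IsBoundedBilinearMap.isBigO_one (B := fun p : E × E => ⟪p.1, p.2⟫)
    isBoundedBilinearMap_inner hf hg

section CrossAsymptotics

variable {α : Type*} {l : Filter α} {f g : α → V3}

lemma isBigO_one_cross (hf : f =O[l] (1 : α → ℝ)) (hg : g =O[l] (1 : α → ℝ)) :
    (fun x => cross (f x) (g x)) =O[l] (1 : α → ℝ) :=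
  crossL.isBoundedBilinearMap.isBigO_one hf hg

lemma tendsto_cross_zero (hf : f =O[l] (1 : α → ℝ)) (hg : Tendsto g l (𝓝 0)) :
    Tendsto (fun x => cross (f x) (g x)) l (𝓝 0) :=
  crossL.isBoundedBilinearMap.tendsto_zero hf hg

lemma isBigO_one_error_field (a : V3) (k : ℝ) (hf : f =O[l] (1 : α → ℝ))
    (hg : g =O[l] (1 : α → ℝ)) :
    (fun x => cross (f x) (a + g x) - k • g x) =O[l] (1 : α → ℝ) :=
  (isBigO_one_cross hf ((isBigO_const_one ℝ a l).add hg)).sub (hg.const_smul_left k)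

lemma tendsto_zero_of_tendsto_cross {a b : V3} (hab : LinearIndependent ℝ ![a, b])
    {v : α → V3} (ha : Tendsto (fun x => cross (v x) a) l (𝓝 0))
    (hb : Tendsto (fun x => cross (v x) b) l (𝓝 0)) : Tendsto v l (𝓝 0) := by
  let T : V3 →L[ℝ] V3 × V3 := (crossL.flip a).prod (crossL.flip b)
  have hT : LinearMap.ker (T : V3 →ₗ[ℝ] V3 × V3) = ⊥ :=
    LinearMap.ker_eq_bot'.2 fun v hv =>
      eq_zero_of_cross_eq_zero hab (congrArg Prod.fst hv) (congrArg Prod.snd hv)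
  refine (LinearMap.isClosedEmbedding_of_injective hT).tendsto_nhds_iff.2 ?_
  rw [map_zero]
  exact ha.prodMk_nhds hb

end CrossAsymptotics

section NormSq

variable {α E : Type*} [SeminormedAddCommGroup E] {l : Filter α}

lemma norm_le_sqrt_of_mul_norm_sq_le {x : E} {c y : ℝ} (hc : 0 < c) (h : c * ‖x‖ ^ 2 ≤ y) :
    ‖x‖ ≤ √(y / c) :=
  Real.le_sqrt_of_sq_le (by rw [le_div_iff₀ hc]; linarith)

lemma isBigO_one_of_mul_norm_sq_le {f : α → E} {g : α → ℝ} {c : ℝ} (hc : 0 < c)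
    (hfg : ∀ x, c * ‖f x‖ ^ 2 ≤ g x) (hg : g =O[l] (1 : α → ℝ)) : f =O[l] (1 : α → ℝ) := by
  obtain ⟨C, hC⟩ := ((isBigO_one_iff ℝ).1 hg).eventually_le
  refine (isBoundedUnder_of_eventually_le (a := √(C / c)) ?_).isBigO_one ℝ
  filter_upwards [hC] with x hx
  exact (norm_le_sqrt_of_mul_norm_sq_le hc (hfg x)).trans
    (Real.sqrt_le_sqrt (div_le_div_of_nonneg_right ((le_abs_self _).trans hx) hc.le))

lemma tendsto_zero_of_mul_norm_sq_le {f : α → E} {g : α → ℝ} {c : ℝ} (hc : 0 < c)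
    (hfg : ∀ x, c * ‖f x‖ ^ 2 ≤ g x) (hg : Tendsto g l (𝓝 0)) : Tendsto f l (𝓝 0) :=
  squeeze_zero_norm (fun x => norm_le_sqrt_of_mul_norm_sq_le hc (hfg x))
    (by simpa using (hg.div_const c).sqrt)

end NormSq

lemma inner_error_field (a b E : V3) (k : ℝ) :
    ⟪E, cross b (a + E) - k • E⟫ = -⟪b, cross E a⟫ - k * ‖E‖ ^ 2 := by
  rw [inner_sub_right, cross_add_right, inner_add_right, inner_cross_self, inner_cross_swap,
    real_inner_smul_right, real_inner_self_eq_norm_sq, add_zero]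

/-- `Ë` is bounded, so Barbalat's lemma gives `Ė → 0`; then `b × a = Ė - b × E + k E → 0`. -/
lemma tendsto_cross_of_error_tendsto_zero {a : V3} {k : ℝ} {b b' E : ℝ → V3}
    (hb : ∀ᶠ t in atTop, HasDerivAt b (b' t) t) (hbO : b =O[atTop] (1 : ℝ → ℝ))
    (hb'O : b' =O[atTop] (1 : ℝ → ℝ))
    (hE : ∀ᶠ t in atTop, HasDerivAt E (cross (b t) (a + E t) - k • E t) t)
    (hE0 : Tendsto E atTop (𝓝 0)) :
    Tendsto (fun t => cross (b t) a) atTop (𝓝 0) := by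
  set E' := fun t => cross (b t) (a + E t) - k • E t
  have hEO : E =O[atTop] (1 : ℝ → ℝ) := hE0.isBigO_one ℝ
  have hE'O : E' =O[atTop] (1 : ℝ → ℝ) := isBigO_one_error_field a k hbO hEO
  have hE'' : ∀ᶠ t in atTop,
      HasDerivAt E' (cross (b t) (E' t) + cross (b' t) (a + E t) - k • E' t) t := by
    filter_upwards [hb, hE] with t hbt hEt
    exact (hbt.cross (hEt.const_add a)).sub (hEt.const_smul k)
  have hE''O : (fun t => cross (b t) (E' t) + cross (b' t) (a + E t) - k • E' t)
      =O[atTop] (1 : ℝ → ℝ) :=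
    ((isBigO_one_cross hbO hE'O).add (isBigO_one_cross hb'O
      ((isBigO_const_one ℝ a atTop).add hEO))).sub (hE'O.const_smul_left k)
  have hE'0 : Tendsto E' atTop (𝓝 0) := hE0.tendsto_deriv_zero hE hE'' hE''O
  have := (hE'0.sub (tendsto_cross_zero hbO hE0)).add (hE0.const_smul k)
  simp only [sub_zero, add_zero, smul_zero] at this
  refine this.congr fun t => ?_
  simp only [E', cross_add_right]
  abel

namespace IsSolution

variable {αi βi : V3} {kα kβ lα lβ : ℝ} {Ω : ℝ → V3} {t₀ : ℝ} {Eα Eβ Eb : ℝ → V3}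

lemma eventually_hasDerivAt (hsol : IsSolution αi βi kα kβ lα lβ Ω t₀ Eα Eβ Eb) :
    ∀ᶠ t in atTop, HasDerivAt Eα (cross (Eb t) (αi + Eα t) - kα • Eα t) t ∧
      HasDerivAt Eβ (cross (Eb t) (βi + Eβ t) - kβ • Eβ t) t ∧
      HasDerivAt Eb (cross (Ω t) (Eb t) + lα • cross (Eα t) αi + lβ • cross (Eβ t) βi) t := by
  filter_upwards [eventually_gt_atTop t₀] with t ht
  obtain ⟨hα, hβ, hb⟩ := hsol t ht.le
  exact ⟨hα.hasDerivAt (Ici_mem_nhds ht), hβ.hasDerivAt (Ici_mem_nhds ht),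
    hb.hasDerivAt (Ici_mem_nhds ht)⟩

lemma eventually_hasDerivAt_lyapunov (hsol : IsSolution αi βi kα kβ lα lβ Ω t₀ Eα Eβ Eb) :
    ∀ᶠ t in atTop, HasDerivAt (fun s => lα * ‖Eα s‖ ^ 2 + lβ * ‖Eβ s‖ ^ 2 + ‖Eb s‖ ^ 2)
      (-(2 * lα * kα * ‖Eα t‖ ^ 2 + 2 * lβ * kβ * ‖Eβ t‖ ^ 2)) t := by
  filter_upwards [hsol.eventually_hasDerivAt] with t ⟨hα, hβ, hb⟩
  refine (((hα.norm_sq.const_mul lα).add (hβ.norm_sq.const_mul lβ)).add hb.norm_sq).congr_deriv ?_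
  rw [inner_error_field, inner_error_field, inner_add_right, inner_add_right, inner_cross_self,
    real_inner_smul_right, real_inner_smul_right]
  ring

lemma exists_tendsto_lyapunov (hsol : IsSolution αi βi kα kβ lα lβ Ω t₀ Eα Eβ Eb)
    (hkα : 0 ≤ kα) (hkβ : 0 ≤ kβ) (hlα : 0 ≤ lα) (hlβ : 0 ≤ lβ) :
    ∃ c, Tendsto (fun t => lα * ‖Eα t‖ ^ 2 + lβ * ‖Eβ t‖ ^ 2 + ‖Eb t‖ ^ 2) atTop (𝓝 c) :=
  exists_tendsto_of_hasDerivAt_nonpos hsol.eventually_hasDerivAt_lyapunov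
    (Eventually.of_forall fun t => neg_nonpos.2 (by positivity))
    ⟨0, by rintro _ ⟨t, rfl⟩; positivity⟩

lemma isBigO_one (hsol : IsSolution αi βi kα kβ lα lβ Ω t₀ Eα Eβ Eb)
    (hkα : 0 ≤ kα) (hkβ : 0 ≤ kβ) (hlα : 0 < lα) (hlβ : 0 < lβ) :
    Eα =O[atTop] (1 : ℝ → ℝ) ∧ Eβ =O[atTop] (1 : ℝ → ℝ) ∧ Eb =O[atTop] (1 : ℝ → ℝ) := by
  obtain ⟨c, hc⟩ := hsol.exists_tendsto_lyapunov hkα hkβ hlα.le hlβ.le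
  have hV := hc.isBigO_one ℝ
  refine ⟨isBigO_one_of_mul_norm_sq_le hlα (fun t => ?_) hV,
    isBigO_one_of_mul_norm_sq_le hlβ (fun t => ?_) hV,
    isBigO_one_of_mul_norm_sq_le one_pos (fun t => ?_) hV⟩ <;>
  nlinarith [mul_nonneg hlα.le (sq_nonneg ‖Eα t‖), mul_nonneg hlβ.le (sq_nonneg ‖Eβ t‖),
    sq_nonneg ‖Eb t‖]

lemma tendsto_Eα_Eβ_zero (hsol : IsSolution αi βi kα kβ lα lβ Ω t₀ Eα Eβ Eb)
    (hkα : 0 < kα) (hkβ : 0 < kβ) (hlα : 0 < lα) (hlβ : 0 < lβ) :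
    Tendsto Eα atTop (𝓝 0) ∧ Tendsto Eβ atTop (𝓝 0) := by
  obtain ⟨c, hc⟩ := hsol.exists_tendsto_lyapunov hkα.le hkβ.le hlα.le hlβ.le
  obtain ⟨hαO, hβO, hbO⟩ := hsol.isBigO_one hkα.le hkβ.le hlα hlβ
  set D := fun t => 2 * lα * kα * ‖Eα t‖ ^ 2 + 2 * lβ * kβ * ‖Eβ t‖ ^ 2
  set D' := fun t => 2 * lα * kα * (2 * ⟪Eα t, cross (Eb t) (αi + Eα t) - kα • Eα t⟫) +
    2 * lβ * kβ * (2 * ⟪Eβ t, cross (Eb t) (βi + Eβ t) - kβ • Eβ t⟫)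
  have hD : ∀ᶠ t in atTop, HasDerivAt (fun t => -D t) (-D' t) t := by
    filter_upwards [hsol.eventually_hasDerivAt] with t ⟨hα, hβ, _⟩
    exact ((hα.norm_sq.const_mul _).add (hβ.norm_sq.const_mul _)).neg
  have hDO : (fun t => -D' t) =O[atTop] (1 : ℝ → ℝ) :=
    ((((isBigO_one_inner hαO (isBigO_one_error_field αi kα hbO hαO)
      ).const_mul_left 2).const_mul_left _).add
    (((isBigO_one_inner hβO (isBigO_one_error_field βi kβ hbO hβO)
      ).const_mul_left 2).const_mul_left _)).neg_left
  have hD0 : Tendsto D atTop (𝓝 0) := by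
    simpa using (hc.tendsto_deriv_zero hsol.eventually_hasDerivAt_lyapunov hD hDO).neg
  exact ⟨tendsto_zero_of_mul_norm_sq_le (c := 2 * lα * kα) (by positivity)
      (fun t => le_add_of_nonneg_right (by positivity)) hD0,
    tendsto_zero_of_mul_norm_sq_le (c := 2 * lβ * kβ) (by positivity)
      (fun t => le_add_of_nonneg_left (by positivity)) hD0⟩

lemma tendsto_cross_Eb (hsol : IsSolution αi βi kα kβ lα lβ Ω t₀ Eα Eβ Eb)
    (hkα : 0 < kα) (hkβ : 0 < kβ) (hlα : 0 < lα) (hlβ : 0 < lβ) (hΩ : Ω =O[atTop] (1 : ℝ → ℝ)) :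
    Tendsto (fun t => cross (Eb t) αi) atTop (𝓝 0) ∧
      Tendsto (fun t => cross (Eb t) βi) atTop (𝓝 0) := by
  obtain ⟨hαO, hβO, hbO⟩ := hsol.isBigO_one hkα.le hkβ.le hlα hlβ
  obtain ⟨hα0, hβ0⟩ := hsol.tendsto_Eα_Eβ_zero hkα hkβ hlα hlβ
  have hb'O : (fun t => cross (Ω t) (Eb t) + lα • cross (Eα t) αi + lβ • cross (Eβ t) βi)
      =O[atTop] (1 : ℝ → ℝ) :=
    ((isBigO_one_cross hΩ hbO).add
      ((isBigO_one_cross hαO (isBigO_const_one ℝ αi atTop)).const_smul_left lα)).add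
      ((isBigO_one_cross hβO (isBigO_const_one ℝ βi atTop)).const_smul_left lβ)
  have hd := hsol.eventually_hasDerivAt
  exact ⟨tendsto_cross_of_error_tendsto_zero (hd.mono fun _ h => h.2.2) hbO hb'O
      (hd.mono fun _ h => h.1) hα0,
    tendsto_cross_of_error_tendsto_zero (hd.mono fun _ h => h.2.2) hbO hb'O
      (hd.mono fun _ h => h.2.1) hβ0⟩

end IsSolution

theorem error_system_global_convergence_general
    (αi βi : V3) (hind : LinearIndependent ℝ ![αi, βi])
    (kα kβ lα lβ : ℝ) (hkα : 0 < kα) (hkβ : 0 < kβ) (hlα : 0 < lα) (hlβ : 0 < lβ)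
    (cω : ℝ)
    (Ω : ℝ → V3) (hΩbdd : ∀ t, ‖Ω t‖ ≤ cω)
    (t₀ : ℝ) (Eα Eβ Eb : ℝ → V3)
    (hsol : IsSolution αi βi kα kβ lα lβ Ω t₀ Eα Eβ Eb) :
    Tendsto (fun t => (Eα t, Eβ t, Eb t)) atTop
      (nhds ((0 : V3), (0 : V3), (0 : V3))) := by
  have hΩ : Ω =O[atTop] (1 : ℝ → ℝ) := (isBoundedUnder_of ⟨cω, hΩbdd⟩).isBigO_one ℝ
  obtain ⟨hα0, hβ0⟩ := hsol.tendsto_Eα_Eβ_zero hkα hkβ hlα hlβ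
  obtain ⟨hcα, hcβ⟩ := hsol.tendsto_cross_Eb hkα hkβ hlα hlβ hΩ
  exact hα0.prodMk_nhds (hβ0.prodMk_nhds (tendsto_zero_of_tendsto_cross hind hcα hcβ))

/-- The origin of the error system is globally attractive: every solution
converges to `(0, 0, 0)` as `t → ∞`. -/
theorem error_system_global_convergence
    (αi βi : V3) (hind : LinearIndependent ℝ ![αi, βi])
    (kα kβ lα lβ : ℝ) (hkα : 0 < kα) (hkβ : 0 < kβ) (hlα : 0 < lα) (hlβ : 0 < lβ)
    (cω : ℝ) (hcω : 0 ≤ cω)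
    (Ω : ℝ → V3) (hΩcont : Continuous Ω) (hΩbdd : ∀ t, ‖Ω t‖ ≤ cω)
    (t₀ : ℝ) (Eα Eβ Eb : ℝ → V3)
    (hsol : IsSolution αi βi kα kβ lα lβ Ω t₀ Eα Eβ Eb) :
    Tendsto (fun t => (Eα t, Eβ t, Eb t)) atTop
      (nhds ((0 : V3), (0 : V3), (0 : V3))) :=
  error_system_global_convergence_general αi βi hind kα kβ lα lβ hkα hkβ hlα hlβ cω Ω hΩbdd t₀ Eα Eβ
    Eb hsol
end
end

section
/- Let α_i, β_i ∈ ℝ³ be linearly independent, let k_α, k_β, l_α, l_β > 0 and c_ω ≥ 0. Then the origin of the error system is uniformly stable: for every ε > 0 there exists δ > 0 (independent of t₀) such that for every t₀ ∈ ℝ, every continuous Ω : ℝ → ℝ³ with ‖Ω(t)‖ ≤ c_ω for all t, and every solution E of the error system on [t₀, ∞) with ‖E(t₀)‖ ≤ δ, one has ‖E(t)‖ ≤ ε for all t ≥ t₀. -/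
open scoped RealInnerProductSpace
open Matrix Filter

noncomputable section

/-! `V = lα ‖Eα‖² + lβ ‖Eβ‖² + ‖Eb‖²` is a Lyapunov function for the error system: along a
solution the coupling terms cancel (`⟪Eα, Eb × αi⟫ = -⟪Eb, Eα × αi⟫`, likewise for `β`, and
`Ω × Eb ⊥ Eb`), leaving `V̇ = -2 (lα kα ‖Eα‖² + lβ kβ ‖Eβ‖²) ≤ 0`. Since `V` is squeezed between
`min(lα, lβ, 1) ‖E‖²` and `max(lα, lβ, 1) ‖E‖²`, this gives
`‖E t‖ ≤ √(max / min) ‖E t₀‖` with a constant independent of `t₀` and `Ω`. -/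

lemma inner_eq_dotProduct (u v : V3) : ⟪u, v⟫ = toF u ⬝ᵥ toF v := by
  rw [EuclideanSpace.inner_eq_star_dotProduct, dotProduct_comm]
  rfl

lemma toF_cross (u v : V3) : toF (cross u v) = toF u ⨯₃ toF v := rfl

lemma cross_add_right_s1 (u v w : V3) : cross u (v + w) = cross u v + cross u w := by
  simp [cross, toE, toF]

lemma inner_cross_self_right (u v : V3) : ⟪v, cross u v⟫ = 0 := by
  rw [inner_eq_dotProduct, toF_cross, dot_cross_self]

lemma inner_cross_swap_s1 (u v w : V3) : ⟪w, cross u v⟫ = -⟪u, cross w v⟫ := by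
  rw [inner_eq_dotProduct, inner_eq_dotProduct, toF_cross, toF_cross,
    triple_product_permutation, ← cross_anticomm, dotProduct_neg]

lemma inner_cross_add_self_sub_smul (a c α : V3) (k : ℝ) :
    ⟪a, cross c (α + a) - k • a⟫ = ⟪a, cross c α⟫ - k * ‖a‖ ^ 2 := by
  rw [inner_sub_right, cross_add_right_s1, inner_add_right, inner_cross_self_right,
    real_inner_smul_right, real_inner_self_eq_norm_sq, add_zero]

def lyapunov (lα lβ : ℝ) (Eα Eβ Eb : V3) : ℝ := lα * ‖Eα‖ ^ 2 + lβ * ‖Eβ‖ ^ 2 + ‖Eb‖ ^ 2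

section Solution

variable {αi βi : V3} {kα kβ lα lβ : ℝ} {Ω : ℝ → V3} {t₀ : ℝ} {Eα Eβ Eb : ℝ → V3}

lemma IsSolution.hasDerivWithinAt_lyapunov (hsol : IsSolution αi βi kα kβ lα lβ Ω t₀ Eα Eβ Eb)
    {t : ℝ} (ht : t ∈ Set.Ici t₀) :
    HasDerivWithinAt (fun s ↦ lyapunov lα lβ (Eα s) (Eβ s) (Eb s))
      (-2 * (lα * kα * ‖Eα t‖ ^ 2 + lβ * kβ * ‖Eβ t‖ ^ 2)) (Set.Ici t₀) t := by
  obtain ⟨hα, hβ, hb⟩ := hsol t ht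
  refine (((hα.norm_sq.const_mul lα).add (hβ.norm_sq.const_mul lβ)).add hb.norm_sq).congr_deriv ?_
  rw [inner_cross_add_self_sub_smul, inner_cross_add_self_sub_smul, inner_add_right,
    inner_add_right, inner_cross_self_right, real_inner_smul_right, real_inner_smul_right,
    inner_cross_swap_s1 (Eα t), inner_cross_swap_s1 (Eβ t)]
  ring

lemma IsSolution.antitoneOn_lyapunov (hsol : IsSolution αi βi kα kβ lα lβ Ω t₀ Eα Eβ Eb)
    (hkα : 0 ≤ kα) (hkβ : 0 ≤ kβ) (hlα : 0 ≤ lα) (hlβ : 0 ≤ lβ) :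
    AntitoneOn (fun s ↦ lyapunov lα lβ (Eα s) (Eβ s) (Eb s)) (Set.Ici t₀) := by
  have hderiv := fun t (ht : t ∈ Set.Ici t₀) ↦ hsol.hasDerivWithinAt_lyapunov ht
  refine antitoneOn_of_hasDerivWithinAt_nonpos (convex_Ici t₀)
    (f' := fun t ↦ -2 * (lα * kα * ‖Eα t‖ ^ 2 + lβ * kβ * ‖Eβ t‖ ^ 2))
    (fun t ht ↦ (hderiv t ht).continuousWithinAt) (fun t ht ↦ ?_) (fun t _ ↦ ?_)
  · rw [interior_Ici] at ht ⊢
    exact (hderiv t (Set.Ioi_subset_Ici_self ht)).mono Set.Ioi_subset_Ici_self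
  · have := mul_nonneg (mul_nonneg hlα hkα) (sq_nonneg ‖Eα t‖)
    have := mul_nonneg (mul_nonneg hlβ hkβ) (sq_nonneg ‖Eβ t‖)
    linarith

end Solution

lemma sq_stateNorm (Eα Eβ Eb : V3) :
    stateNorm Eα Eβ Eb ^ 2 = ‖Eα‖ ^ 2 + ‖Eβ‖ ^ 2 + ‖Eb‖ ^ 2 :=
  Real.sq_sqrt (by positivity)

lemma min_mul_sq_stateNorm_le_lyapunov (lα lβ : ℝ) (Eα Eβ Eb : V3) :
    min lα (min lβ 1) * stateNorm Eα Eβ Eb ^ 2 ≤ lyapunov lα lβ Eα Eβ Eb := by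
  rw [sq_stateNorm, lyapunov, mul_add, mul_add]
  gcongr
  · exact min_le_left _ _
  · exact (min_le_right _ _).trans (min_le_left _ _)
  · exact mul_le_of_le_one_left (sq_nonneg _) ((min_le_right _ _).trans (min_le_right _ _))

lemma lyapunov_le_max_mul_sq_stateNorm (lα lβ : ℝ) (Eα Eβ Eb : V3) :
    lyapunov lα lβ Eα Eβ Eb ≤ max lα (max lβ 1) * stateNorm Eα Eβ Eb ^ 2 := by
  rw [sq_stateNorm, lyapunov, mul_add, mul_add]
  gcongr
  · exact le_max_left _ _
  · exact (le_max_left _ _).trans (le_max_right _ _)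
  · exact le_mul_of_one_le_left (sq_nonneg _) ((le_max_right _ _).trans (le_max_right _ _))

lemma le_sqrt_div_mul_of_antitoneOn {N L : ℝ → ℝ} {s : Set ℝ} {m M : ℝ} (hm : 0 < m)
    (hN : ∀ t, 0 ≤ N t) (hlow : ∀ t, m * N t ^ 2 ≤ L t) (hup : ∀ t, L t ≤ M * N t ^ 2)
    (hL : AntitoneOn L s) {t₀ t : ℝ} (ht₀ : t₀ ∈ s) (ht : t ∈ s) (hle : t₀ ≤ t) :
    N t ≤ √(M / m) * N t₀ := by
  have hsq : N t ^ 2 ≤ M / m * N t₀ ^ 2 := by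
    rw [div_mul_eq_mul_div, le_div_iff₀ hm]
    linarith [hlow t, hL ht₀ ht hle, hup t₀]
  calc N t = √(N t ^ 2) := (Real.sqrt_sq (hN t)).symm
    _ ≤ √(M / m * N t₀ ^ 2) := Real.sqrt_le_sqrt hsq
    _ = √(M / m) * N t₀ := by rw [Real.sqrt_mul' _ (sq_nonneg _), Real.sqrt_sq (hN t₀)]

theorem error_system_uniform_stability_general
    (αi βi : V3)
    (kα kβ lα lβ : ℝ) (hkα : 0 < kα) (hkβ : 0 < kβ) (hlα : 0 < lα) (hlβ : 0 < lβ)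
    (cω : ℝ) :
    ∀ ε > (0 : ℝ), ∃ δ > (0 : ℝ),
      ∀ (t₀ : ℝ) (Ω : ℝ → V3), Continuous Ω → (∀ t, ‖Ω t‖ ≤ cω) →
        ∀ Eα Eβ Eb : ℝ → V3, IsSolution αi βi kα kβ lα lβ Ω t₀ Eα Eβ Eb →
          stateNorm (Eα t₀) (Eβ t₀) (Eb t₀) ≤ δ →
          ∀ t ≥ t₀, stateNorm (Eα t) (Eβ t) (Eb t) ≤ ε := by
  intro ε hε
  set m := min lα (min lβ 1)
  set M := max lα (max lβ 1)
  have hm : 0 < m := lt_min hlα (lt_min hlβ one_pos)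
  have hM : 0 < M := hlα.trans_le (le_max_left _ _)
  refine ⟨ε / √(M / m), by positivity, fun t₀ Ω _ _ Eα Eβ Eb hsol h₀ t ht ↦ ?_⟩
  calc stateNorm (Eα t) (Eβ t) (Eb t)
      ≤ √(M / m) * stateNorm (Eα t₀) (Eβ t₀) (Eb t₀) :=
        le_sqrt_div_mul_of_antitoneOn hm (fun s ↦ Real.sqrt_nonneg _)
          (fun s ↦ min_mul_sq_stateNorm_le_lyapunov lα lβ (Eα s) (Eβ s) (Eb s))
          (fun s ↦ lyapunov_le_max_mul_sq_stateNorm lα lβ (Eα s) (Eβ s) (Eb s))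
          (hsol.antitoneOn_lyapunov hkα.le hkβ.le hlα.le hlβ.le) Set.self_mem_Ici ht ht
    _ ≤ √(M / m) * (ε / √(M / m)) := by gcongr
    _ = ε := mul_div_cancel₀ _ (by positivity)

/-- The origin of the error system is uniformly stable. -/
theorem error_system_uniform_stability
    (αi βi : V3) (hind : LinearIndependent ℝ ![αi, βi])
    (kα kβ lα lβ : ℝ) (hkα : 0 < kα) (hkβ : 0 < kβ) (hlα : 0 < lα) (hlβ : 0 < lβ)
    (cω : ℝ) (hcω : 0 ≤ cω) :
    ∀ ε > (0 : ℝ), ∃ δ > (0 : ℝ),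
      ∀ (t₀ : ℝ) (Ω : ℝ → V3), Continuous Ω → (∀ t, ‖Ω t‖ ≤ cω) →
        ∀ Eα Eβ Eb : ℝ → V3, IsSolution αi βi kα kβ lα lβ Ω t₀ Eα Eβ Eb →
          stateNorm (Eα t₀) (Eβ t₀) (Eb t₀) ≤ δ →
          ∀ t ≥ t₀, stateNorm (Eα t) (Eβ t) (Eb t) ≤ ε :=
  error_system_uniform_stability_general αi βi kα kβ lα lβ hkα hkβ hlα hlβ cω
end
end

section
/- Let a, b ∈ ℝ³ be linearly independent and let λ, μ > 0. Then the symmetric 3×3 matrix −(λ a_×² + μ b_×²) is positive definite; in particular there exists ν > 0 such that ⟨x, (λ a_×² + μ b_×²) x⟩ ≤ −ν ‖x‖² for all x ∈ ℝ³. -/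
open scoped RealInnerProductSpace
open Matrix Filter

noncomputable section

/-- The skew-symmetric matrix `v_×` with `v_× x = v × x`. -/
def skew (v : V3) : Matrix (Fin 3) (Fin 3) ℝ :=
  !![0, -(toF v 2), toF v 1; toF v 2, 0, -(toF v 0); -(toF v 1), toF v 0, 0]

/-- Matrix-vector multiplication on `V3`. -/
def mulVecE (M : Matrix (Fin 3) (Fin 3) ℝ) (x : V3) : V3 := toE (M.mulVec (toF x))

/-!
Write `C` for the `6 × 3` matrix obtained by stacking `√λ a_×` on top of `√μ b_×`. Since `v_×` is
skew-symmetric, `−(λ a_×² + μ b_×²) = Cᵀ C`, and `C x = 0` means `a × x = b × x = 0`, i.e. `x` is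
parallel to both `a` and `b`, which forces `x = 0` by linear independence. An injective matrix
gives a positive definite Gram matrix `Cᵀ C`, and an injective linear map on a finite-dimensional
space is antilipschitz, `‖x‖ ≤ K ‖C x‖`, which gives `ν = K⁻²`.
-/

open scoped InnerProductSpace

lemma Matrix.inner_toEuclideanLin_conjTranspose_mul_self {𝕜 m n : Type*} [RCLike 𝕜] [Fintype m]
    [Fintype n] [DecidableEq n] (C : Matrix m n 𝕜) (x : EuclideanSpace 𝕜 n) :
    ⟪x, toEuclideanLin (Cᴴ * C) x⟫_𝕜 = (‖toEuclideanLin C x‖ : 𝕜) ^ 2 := by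
  classical
  have hadj : toEuclideanLin (Cᴴ * C) x = (toEuclideanLin C).adjoint (toEuclideanLin C x) := by
    rw [← toEuclideanLin_conjTranspose_eq_adjoint]
    simp [toEuclideanLin, toLpLin_apply, mulVec_mulVec]
  rw [hadj, LinearMap.adjoint_inner_right, inner_self_eq_norm_sq_to_K]

lemma LinearMap.exists_pos_mul_norm_sq_le_of_injective {𝕜 E F : Type*}
    [NontriviallyNormedField 𝕜] [CompleteSpace 𝕜] [NormedAddCommGroup E] [NormedSpace 𝕜 E]
    [FiniteDimensional 𝕜 E] [NormedAddCommGroup F] [NormedSpace 𝕜 F] (f : E →ₗ[𝕜] F)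
    (hf : Function.Injective f) : ∃ ν > (0 : ℝ), ∀ x, ν * ‖x‖ ^ 2 ≤ ‖f x‖ ^ 2 := by
  obtain ⟨K, hK, hanti⟩ := f.injective_iff_antilipschitz.1 hf
  refine ⟨((K : ℝ) ^ 2)⁻¹, by positivity, fun x => ?_⟩
  have hx : ‖x‖ ≤ K * ‖f x‖ := ZeroHomClass.bound_of_antilipschitz f hanti x
  rw [inv_mul_le_iff₀ (by positivity), ← mul_pow]
  exact pow_le_pow_left₀ (norm_nonneg x) hx 2

lemma eq_zero_of_crossProduct_eq_zero {K : Type*} [Field K] {a b x : Fin 3 → K}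
    (hab : LinearIndependent K ![a, b]) (ha : a ⨯₃ x = 0) (hb : b ⨯₃ x = 0) : x = 0 := by
  by_contra hx
  have parallel : ∀ v, v ⨯₃ x = 0 → ∃ c : K, c • x = v := fun v hv => by
    have hdep : ¬ LinearIndependent K ![v, x] :=
      mt crossProduct_ne_zero_iff_linearIndependent.2 (not_not.2 hv)
    simpa [linearIndependent_fin2, hx] using hdep
  obtain ⟨c, rfl⟩ := parallel a ha
  obtain ⟨d, rfl⟩ := parallel b hb
  obtain ⟨-, hc⟩ := LinearIndependent.pair_iff.1 hab d (-c) (by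
    rw [smul_smul, smul_smul, neg_mul, neg_smul, mul_comm, add_neg_cancel])
  exact hab.ne_zero 0 (by simp [neg_eq_zero.1 hc])

lemma linearIndependent_toF {a b : V3} (h : LinearIndependent ℝ ![a, b]) :
    LinearIndependent ℝ ![toF a, toF b] := by
  have hcomp : ![toF a, toF b] = WithLp.linearEquiv 2 ℝ (Fin 3 → ℝ) ∘ ![a, b] := by
    ext i : 1; fin_cases i <;> rfl
  rw [hcomp]
  exact h.map' _ (LinearEquiv.ker _)

lemma mulVecE_eq_toEuclideanLin (M : Matrix (Fin 3) (Fin 3) ℝ) : mulVecE M = toEuclideanLin M :=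
  rfl

lemma skew_mulVec (v : V3) (x : Fin 3 → ℝ) : skew v *ᵥ x = toF v ⨯₃ x := by
  ext i
  fin_cases i <;> simp [skew, cross_apply, mulVec, dotProduct, Fin.sum_univ_three] <;> ring

lemma skew_transpose (v : V3) : (skew v)ᵀ = -skew v := by
  ext i j
  fin_cases i <;> fin_cases j <;> simp [skew]

def skewStack (a b : V3) (lam mu : ℝ) : Matrix (Fin 3 ⊕ Fin 3) (Fin 3) ℝ :=
  fromRows (√lam • skew a) (√mu • skew b)

lemma skewStack_transpose_mul_self (a b : V3) {lam mu : ℝ} (hlam : 0 ≤ lam) (hmu : 0 ≤ mu) :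
    (skewStack a b lam mu)ᵀ * skewStack a b lam mu = -(lam • skew a ^ 2 + mu • skew b ^ 2) := by
  rw [← conjTranspose_eq_transpose_of_trivial, skewStack,
    conjTranspose_fromRows_eq_fromCols_conjTranspose, fromCols_mul_fromRows]
  simp only [conjTranspose_eq_transpose_of_trivial, transpose_smul, skew_transpose, smul_neg,
    neg_mul, smul_mul_smul_comm, Real.mul_self_sqrt hlam, Real.mul_self_sqrt hmu, sq, neg_add]

lemma skewStack_mulVec_injective {a b : V3} (hab : LinearIndependent ℝ ![a, b]) {lam mu : ℝ}
    (hlam : 0 < lam) (hmu : 0 < mu) : Function.Injective (skewStack a b lam mu *ᵥ ·) := by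
  refine (injective_iff_map_eq_zero (mulVecLin (skewStack a b lam mu))).2 fun x hx => ?_
  simp only [mulVecLin_apply, skewStack, fromRows_mulVec, smul_mulVec, skew_mulVec] at hx
  obtain ⟨ha, hb⟩ := Sum.elim_eq_iff.1 (hx.trans Sum.elim_zero_zero.symm)
  exact eq_zero_of_crossProduct_eq_zero (linearIndependent_toF hab)
    ((smul_eq_zero_iff_right (Real.sqrt_ne_zero'.2 hlam)).1 ha)
    ((smul_eq_zero_iff_right (Real.sqrt_ne_zero'.2 hmu)).1 hb)

/-- For linearly independent `a, b` and `λ, μ > 0`, the symmetric matrix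
`−(λ a_×² + μ b_×²)` is positive definite; in particular
`⟨x, (λ a_×² + μ b_×²) x⟩ ≤ −ν ‖x‖²` for some `ν > 0` and all `x`. -/
theorem neg_skew_sq_combination_posDef
    (a b : V3) (hind : LinearIndependent ℝ ![a, b])
    (lam mu : ℝ) (hlam : 0 < lam) (hmu : 0 < mu) :
    (-(lam • skew a ^ 2 + mu • skew b ^ 2)).PosDef ∧
    ∃ ν > (0 : ℝ), ∀ x : V3,
      ⟪x, mulVecE (lam • skew a ^ 2 + mu • skew b ^ 2) x⟫ ≤ -ν * ‖x‖ ^ 2 := by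
  set C := skewStack a b lam mu
  have hM : -(lam • skew a ^ 2 + mu • skew b ^ 2) = Cᴴ * C := by
    rw [conjTranspose_eq_transpose_of_trivial, skewStack_transpose_mul_self a b hlam.le hmu.le]
  have hC : Function.Injective (C *ᵥ ·) := skewStack_mulVec_injective hind hlam hmu
  refine ⟨hM ▸ PosDef.conjTranspose_mul_self C hC, ?_⟩
  obtain ⟨ν, hν, hbound⟩ := (toEuclideanLin C).exists_pos_mul_norm_sq_le_of_injective
    fun x y h => WithLp.ofLp_injective 2 (hC (congrArg WithLp.ofLp h))
  refine ⟨ν, hν, fun x => ?_⟩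
  rw [← neg_neg (lam • skew a ^ 2 + mu • skew b ^ 2), hM, mulVecE_eq_toEuclideanLin, map_neg,
    LinearMap.neg_apply, inner_neg_right, inner_toEuclideanLin_conjTranspose_mul_self]
  simpa using hbound x
end
end

section
/- Let α_i, β_i ∈ ℝ³ be linearly independent, k_α, k_β, l_α, l_β > 0, and let μ > 0 satisfy ⟨x, ((l_α/k_α)(α_i)_×² + (l_β/k_β)(β_i)_×²) x⟩ ≤ −μ‖x‖² for all x ∈ ℝ³. Then for every ε > 0 and all E_α, E_β, E_b, Ω ∈ ℝ³, with D as defined from the error system: ⟨E_b, D⟩ ≤ (ε/2 − μ)‖E_b‖² + (l_α² ‖α_i‖² / (ε k_α²)) ‖E_α‖² ‖E_b‖² + (l_β² ‖β_i‖² / (ε k_β²)) ‖E_β‖² ‖E_b‖². -/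
open scoped RealInnerProductSpace
open Matrix Filter

noncomputable section

/-- The quadratic part of the Lyapunov function,
`V₁ = (1/2)(lα‖Eα‖² + lβ‖Eβ‖² + ‖Eb‖²)`. -/
def V1 (lα lβ : ℝ) (Eα Eβ Eb : V3) : ℝ :=
  (1 / 2) * (lα * ‖Eα‖ ^ 2 + lβ * ‖Eβ‖ ^ 2 + ‖Eb‖ ^ 2)

/-- `u_{αβ} = (lα/kα) αi × Eα + (lβ/kβ) βi × Eβ`. -/
def uab (αi βi : V3) (kα kβ lα lβ : ℝ) (Eα Eβ : V3) : V3 :=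
  (lα / kα) • cross αi Eα + (lβ / kβ) • cross βi Eβ

/-- `D`, the time derivative of `Eb − u_{αβ}` along the error system. -/
def Dvec (αi βi : V3) (kα kβ lα lβ : ℝ) (Eα Eβ Eb Ω : V3) : V3 :=
  (cross Ω Eb + lα • cross Eα αi + lβ • cross Eβ βi)
    - (lα / kα) • cross αi (cross Eb (αi + Eα) - kα • Eα)
    - (lβ / kβ) • cross βi (cross Eb (βi + Eβ) - kβ • Eβ)

/-!
Expanding the double cross products, the terms `lα (Eα × αi + αi × Eα)` cancel, `Ω × Eb` is
orthogonal to `Eb`, and `-αi × (Eb × αi) = (αi)_×² Eb`, so `⟨Eb, D⟩` is the quadratic form of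
`(lα/kα)(αi)_×² + (lβ/kβ)(βi)_×²` at `Eb`, bounded by `-μ‖Eb‖²`, minus the two cubic terms
`(lα/kα) ⟨Eb, αi × (Eb × Eα)⟩` and its `β` analogue. Each cubic term is at most
`(lα/kα)‖αi‖‖Eα‖ ‖Eb‖²`, and Young's inequality `c ≤ ε/4 + c²/ε` splits that into the claimed terms.
-/

lemma le_div_four_add_sq_div {ε : ℝ} (hε : 0 < ε) (c : ℝ) : c ≤ ε / 4 + c ^ 2 / ε := by
  rw [div_add_div _ _ (by norm_num) hε.ne', le_div_iff₀ (by positivity)]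
  nlinarith [sq_nonneg (2 * c - ε)]

namespace V3

lemma toF_cross (v w : V3) : toF (cross v w) = crossProduct (toF v) (toF w) := rfl

lemma inner_eq_dotProduct (x y : V3) : ⟪x, y⟫ = toF x ⬝ᵥ toF y := by
  simp [EuclideanSpace.inner_eq_star_dotProduct, toF, dotProduct_comm]

lemma cross_add_right (v w w' : V3) : cross v (w + w') = cross v w + cross v w' := by
  simp [cross, toF, toE]

lemma cross_sub_right (v w w' : V3) : cross v (w - w') = cross v w - cross v w' := by
  simp [cross, toF, toE]

lemma cross_smul_right (c : ℝ) (v w : V3) : cross v (c • w) = c • cross v w := by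
  simp [cross, toF, toE]

lemma cross_anticomm (v w : V3) : cross w v = -cross v w := by
  rw [cross, cross, ← _root_.cross_anticomm]; rfl

lemma inner_cross_self (v w : V3) : ⟪w, cross v w⟫ = 0 := by
  rw [inner_eq_dotProduct, toF_cross, dot_cross_self]

lemma norm_cross_le (v w : V3) : ‖cross v w‖ ≤ ‖v‖ * ‖w‖ := by
  have lagrange : ‖cross v w‖ ^ 2 = ‖v‖ ^ 2 * ‖w‖ ^ 2 - ⟪v, w⟫ ^ 2 := by
    simp only [← real_inner_self_eq_norm_sq, inner_eq_dotProduct, toF_cross, cross_dot_cross,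
      dotProduct_comm (toF w) (toF v)]
    ring
  rw [← sq_le_sq₀ (norm_nonneg _) (by positivity), mul_pow, lagrange]
  linarith [sq_nonneg ⟪v, w⟫]

lemma neg_inner_cross_cross_le (a b E : V3) :
    -⟪b, cross a (cross b E)⟫ ≤ ‖a‖ * ‖E‖ * ‖b‖ ^ 2 :=
  calc -⟪b, cross a (cross b E)⟫
      ≤ ‖b‖ * ‖cross a (cross b E)‖ := (neg_le_abs _).trans (abs_real_inner_le_norm _ _)
    _ ≤ ‖b‖ * (‖a‖ * (‖b‖ * ‖E‖)) := by
        gcongr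
        exact (norm_cross_le _ _).trans (by gcongr; exact norm_cross_le _ _)
    _ = ‖a‖ * ‖E‖ * ‖b‖ ^ 2 := by ring

lemma neg_mul_inner_cross_cross_le {c ε : ℝ} (hc : 0 ≤ c) (hε : 0 < ε) (a b E : V3) :
    -(c * ⟪b, cross a (cross b E)⟫)
      ≤ ε / 4 * ‖b‖ ^ 2 + (c * ‖a‖) ^ 2 / ε * ‖E‖ ^ 2 * ‖b‖ ^ 2 :=
  calc -(c * ⟪b, cross a (cross b E)⟫)
      ≤ c * (‖a‖ * ‖E‖ * ‖b‖ ^ 2) := by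
        rw [← mul_neg]; exact mul_le_mul_of_nonneg_left (neg_inner_cross_cross_le a b E) hc
    _ = (c * ‖a‖ * ‖E‖) * ‖b‖ ^ 2 := by ring
    _ ≤ (ε / 4 + (c * ‖a‖ * ‖E‖) ^ 2 / ε) * ‖b‖ ^ 2 := by
        gcongr; exact le_div_four_add_sq_div hε _
    _ = ε / 4 * ‖b‖ ^ 2 + (c * ‖a‖) ^ 2 / ε * ‖E‖ ^ 2 * ‖b‖ ^ 2 := by ring

lemma mulVecE_add_smul (a b : ℝ) (A B : Matrix (Fin 3) (Fin 3) ℝ) (x : V3) :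
    mulVecE (a • A + b • B) x = a • mulVecE A x + b • mulVecE B x := by
  simp [mulVecE, toE, Matrix.add_mulVec, Matrix.smul_mulVec]

lemma mulVecE_mul (A B : Matrix (Fin 3) (Fin 3) ℝ) (x : V3) :
    mulVecE (A * B) x = mulVecE A (mulVecE B x) := by
  simp [mulVecE, toE, toF, Matrix.mulVec_mulVec]

lemma mulVecE_skew (v x : V3) : mulVecE (skew v) x = cross v x := by
  ext i
  fin_cases i <;>
    simp [mulVecE, skew, cross, toE, toF, crossProduct, dotProduct, Fin.sum_univ_three] <;> ring

lemma mulVecE_skew_sq (v x : V3) : mulVecE (skew v ^ 2) x = cross v (cross v x) := by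
  rw [sq, mulVecE_mul, mulVecE_skew, mulVecE_skew]

lemma cross_cross_add_sub_smul (a b E : V3) (k : ℝ) :
    cross a (cross b (a + E) - k • E)
      = cross a (cross b E) - mulVecE (skew a ^ 2) b - k • cross a E := by
  rw [mulVecE_skew_sq, cross_sub_right, cross_add_right, cross_anticomm a b, cross_add_right,
    cross_smul_right, ← neg_one_smul ℝ (cross a b), cross_smul_right]
  module

lemma Dvec_eq (αi βi : V3) {kα kβ : ℝ} (hkα : kα ≠ 0) (hkβ : kβ ≠ 0) (lα lβ : ℝ)
    (Eα Eβ Eb Ω : V3) :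
    Dvec αi βi kα kβ lα lβ Eα Eβ Eb Ω
      = cross Ω Eb + mulVecE ((lα / kα) • skew αi ^ 2 + (lβ / kβ) • skew βi ^ 2) Eb
        - (lα / kα) • cross αi (cross Eb Eα) - (lβ / kβ) • cross βi (cross Eb Eβ) := by
  rw [Dvec, cross_cross_add_sub_smul, cross_cross_add_sub_smul, mulVecE_add_smul,
    cross_anticomm αi Eα, cross_anticomm βi Eβ]
  match_scalars <;> field_simp <;> ring

lemma inner_Dvec (αi βi : V3) {kα kβ : ℝ} (hkα : kα ≠ 0) (hkβ : kβ ≠ 0) (lα lβ : ℝ)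
    (Eα Eβ Eb Ω : V3) :
    ⟪Eb, Dvec αi βi kα kβ lα lβ Eα Eβ Eb Ω⟫
      = ⟪Eb, mulVecE ((lα / kα) • skew αi ^ 2 + (lβ / kβ) • skew βi ^ 2) Eb⟫
        - (lα / kα) * ⟪Eb, cross αi (cross Eb Eα)⟫ - (lβ / kβ) * ⟪Eb, cross βi (cross Eb Eβ)⟫ := by
  rw [Dvec_eq αi βi hkα hkβ, inner_sub_right, inner_sub_right, inner_add_right, inner_smul_right,
    inner_smul_right, inner_cross_self, zero_add]

end V3

theorem inner_Eb_D_bound_general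
    (αi βi : V3)
    (kα kβ lα lβ : ℝ) (hkα : 0 < kα) (hkβ : 0 < kβ) (hlα : 0 < lα) (hlβ : 0 < lβ)
    (μ : ℝ)
    (hμbound : ∀ x : V3,
      ⟪x, mulVecE ((lα / kα) • skew αi ^ 2 + (lβ / kβ) • skew βi ^ 2) x⟫ ≤ -μ * ‖x‖ ^ 2) :
    ∀ ε > (0 : ℝ), ∀ Eα Eβ Eb Ω : V3,
      ⟪Eb, Dvec αi βi kα kβ lα lβ Eα Eβ Eb Ω⟫
        ≤ (ε / 2 - μ) * ‖Eb‖ ^ 2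
          + (lα ^ 2 * ‖αi‖ ^ 2 / (ε * kα ^ 2)) * ‖Eα‖ ^ 2 * ‖Eb‖ ^ 2
          + (lβ ^ 2 * ‖βi‖ ^ 2 / (ε * kβ ^ 2)) * ‖Eβ‖ ^ 2 * ‖Eb‖ ^ 2 := by
  intro ε hε Eα Eβ Eb Ω
  have quadratic := hμbound Eb
  have cubicα := V3.neg_mul_inner_cross_cross_le (c := lα / kα) (by positivity) hε αi Eb Eα
  have cubicβ := V3.neg_mul_inner_cross_cross_le (c := lβ / kβ) (by positivity) hε βi Eb Eβ
  have coeff (l k a : ℝ) : (l / k * a) ^ 2 / ε = l ^ 2 * a ^ 2 / (ε * k ^ 2) := by ring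
  rw [coeff] at cubicα cubicβ
  rw [V3.inner_Dvec αi βi hkα.ne' hkβ.ne']
  linarith

/-- Bound on `⟨E_b, D⟩` obtained from Young's inequality. -/
theorem inner_Eb_D_bound
    (αi βi : V3) (hind : LinearIndependent ℝ ![αi, βi])
    (kα kβ lα lβ : ℝ) (hkα : 0 < kα) (hkβ : 0 < kβ) (hlα : 0 < lα) (hlβ : 0 < lβ)
    (μ : ℝ) (hμ : 0 < μ)
    (hμbound : ∀ x : V3,
      ⟪x, mulVecE ((lα / kα) • skew αi ^ 2 + (lβ / kβ) • skew βi ^ 2) x⟫ ≤ -μ * ‖x‖ ^ 2) :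
    ∀ ε > (0 : ℝ), ∀ Eα Eβ Eb Ω : V3,
      ⟪Eb, Dvec αi βi kα kβ lα lβ Eα Eβ Eb Ω⟫
        ≤ (ε / 2 - μ) * ‖Eb‖ ^ 2
          + (lα ^ 2 * ‖αi‖ ^ 2 / (ε * kα ^ 2)) * ‖Eα‖ ^ 2 * ‖Eb‖ ^ 2
          + (lβ ^ 2 * ‖βi‖ ^ 2 / (ε * kβ ^ 2)) * ‖Eβ‖ ^ 2 * ‖Eb‖ ^ 2 :=
  inner_Eb_D_bound_general αi βi kα kβ lα lβ hkα hkβ hlα hlβ μ hμbound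
end
end
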